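/- arXiv:1808.10367 — 2 statements merged into one kernel-verified Lean document; each statement's English description precedes it below -/
import Mathlib

section
/- (Lemma 1 of the paper) Let u₁,…,uₙ be vectors in a real inner product space with Gram matrix G, let û = ∑ⱼ cᴸⱼ uⱼ and P = ∑ⱼ cᴴⱼ uⱼ with ‖cᴴ - cᴸ‖ ≤ ε, and let u ∈ H satisfy ‖u - P‖ ≤ δ ‖P - û‖ for some δ ≥ 0. Then ‖u - û‖ ≤ ε (1 + δ) √(σ_max(G)). -/
open Matrix
open scoped RealInnerProductSpace

/-! `P - û = ∑ⱼ (cᴴⱼ - cᴸⱼ) uⱼ`, so `‖P - û‖²` is the quadratic form of the Gram matrix at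
`cᴴ - cᴸ`, which the Rayleigh bound caps by `σ_max ‖cᴴ - cᴸ‖² ≤ σ_max ε²`. The triangle
inequality through `P` turns `‖u - P‖ ≤ δ ‖P - û‖` into the factor `1 + δ`. -/

open scoped MatrixOrder ComplexOrder in
theorem Matrix.IsHermitian.star_dotProduct_mulVec_le {n 𝕜 : Type*} [Fintype n] [DecidableEq n]
    [RCLike 𝕜] {A : Matrix n n 𝕜} (hA : A.IsHermitian) {r : ℝ} (h : ∀ i, hA.eigenvalues i ≤ r)
    (x : n → 𝕜) :
    star x ⬝ᵥ A *ᵥ x ≤ r * (star x ⬝ᵥ x) := by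
  have hle : A ≤ algebraMap ℝ (Matrix n n 𝕜) r := by
    refine le_algebraMap_of_spectrum_le fun s hs => ?_
    obtain ⟨i, rfl⟩ := hA.spectrum_real_eq_range_eigenvalues ▸ hs
    exact h i
  simpa [sub_mulVec, dotProduct_sub, Algebra.algebraMap_eq_smul_one, smul_mulVec, dotProduct_smul]
    using (Matrix.le_iff.mp hle).dotProduct_mulVec_nonneg x

theorem norm_sum_smul_le_sqrt_mul_sqrt {ι H : Type*} [Fintype ι] [DecidableEq ι]
    [NormedAddCommGroup H] [InnerProductSpace ℝ H] (u : ι → H) {σ : ℝ}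
    (hσ : ∀ i, (isHermitian_gram ℝ u).eigenvalues i ≤ σ) (c : ι → ℝ) :
    ‖∑ i, c i • u i‖ ≤ √σ * √(∑ i, c i ^ 2) := by
  have hquad : ‖∑ i, c i • u i‖ ^ 2 ≤ σ * ∑ i, c i ^ 2 := by
    have := (isHermitian_gram ℝ u).star_dotProduct_mulVec_le hσ c
    rw [star_dotProduct_gram_mulVec, real_inner_self_eq_norm_sq, star_trivial] at this
    simpa [dotProduct, sq] using this
  rw [← Real.sqrt_mul' _ (by positivity)]
  simpa using Real.abs_le_sqrt hquad

theorem norm_sub_le_one_add_mul_of_norm_sub_le {E : Type*} [SeminormedAddCommGroup E]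
    {x y z : E} {δ : ℝ} (h : ‖x - y‖ ≤ δ * ‖y - z‖) : ‖x - z‖ ≤ (1 + δ) * ‖y - z‖ :=
  calc ‖x - z‖ ≤ ‖x - y‖ + ‖y - z‖ := norm_sub_le_norm_sub_add_norm_sub x y z
    _ ≤ (1 + δ) * ‖y - z‖ := by linarith

theorem stmt_4_general {H : Type*} [NormedAddCommGroup H] [InnerProductSpace ℝ H]
    {n : ℕ} (u : Fin n → H) (G : Matrix (Fin n) (Fin n) ℝ)
    (hG : ∀ i j, G i j = ⟪u i, u j⟫) (hGsym : G.IsHermitian)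
    (σmax : ℝ) (hσ : IsGreatest (Set.range hGsym.eigenvalues) σmax)
    (cL cH : Fin n → ℝ) (ε δ : ℝ) (hδ : 0 ≤ δ)
    (hc : Real.sqrt (∑ i, (cH i - cL i) ^ 2) ≤ ε)
    (uH : H)
    (uhat P : H) (huhat : uhat = ∑ j, cL j • u j) (hP : P = ∑ j, cH j • u j)
    (hd : ‖uH - P‖ ≤ δ * ‖P - uhat‖) :
    ‖uH - uhat‖ ≤ ε * (1 + δ) * Real.sqrt σmax := by
  obtain rfl : G = gram ℝ u := Matrix.ext hG
  have hdiff : P - uhat = ∑ j, (cH j - cL j) • u j := by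
    simp only [hP, huhat, ← Finset.sum_sub_distrib, sub_smul]
  have hPuhat : ‖P - uhat‖ ≤ √σmax * ε := by
    rw [hdiff]
    exact (norm_sum_smul_le_sqrt_mul_sqrt u (fun i => hσ.2 ⟨i, rfl⟩) _).trans
      (mul_le_mul_of_nonneg_left hc (Real.sqrt_nonneg _))
  calc ‖uH - uhat‖ ≤ (1 + δ) * ‖P - uhat‖ := norm_sub_le_one_add_mul_of_norm_sub_le hd
    _ ≤ (1 + δ) * (√σmax * ε) := by gcongr
    _ = ε * (1 + δ) * Real.sqrt σmax := by ring

/-- Lemma 1: bi-fidelity displacement error bound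
`‖u - û‖ ≤ ε (1 + δ) √(σ_max(G))`. -/
theorem stmt_4 {H : Type*} [NormedAddCommGroup H] [InnerProductSpace ℝ H]
    {n : ℕ} (u : Fin n → H) (G : Matrix (Fin n) (Fin n) ℝ)
    (hG : ∀ i j, G i j = ⟪u i, u j⟫) (hGsym : G.IsHermitian)
    (σmax : ℝ) (hσ : IsGreatest (Set.range hGsym.eigenvalues) σmax)
    (cL cH : Fin n → ℝ) (ε δ : ℝ) (hε : 0 ≤ ε) (hδ : 0 ≤ δ)
    (hc : Real.sqrt (∑ i, (cH i - cL i) ^ 2) ≤ ε)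
    (uH : H)
    (uhat P : H) (huhat : uhat = ∑ j, cL j • u j) (hP : P = ∑ j, cH j • u j)
    (hd : ‖uH - P‖ ≤ δ * ‖P - uhat‖) :
    ‖uH - uhat‖ ≤ ε * (1 + δ) * Real.sqrt σmax :=
  stmt_4_general u G hG hGsym σmax hσ cL cH ε δ hδ hc uH uhat P huhat hP hd
end

section
/- (Proposition 1, compliance part) Let K be a real symmetric n×n matrix, let u₁,…,uₙ ∈ ℝᵐ have Gram matrix G, let û = ∑ⱼ cᴸⱼ uⱼ, P = ∑ⱼ cᴴⱼ uⱼ with ‖cᴴ - cᴸ‖ ≤ ε, and let u satisfy ‖u - P‖ ≤ δ‖P - û‖. Define C = uᵀ K u, Ĉ = ûᵀ K û. Then |C - Ĉ| ≤ A · σ_max(K), where A = ε(1 + δ) σ_max(G) [2‖cᴸ‖ + ε(1 + δ)]. -/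
open Matrix
open scoped Matrix.Norms.L2Operator MatrixOrder

/-! With `U` the matrix whose rows are the snapshots, `G = U Uᵀ` and `∑ⱼ cⱼ uⱼ = c ᵥ* U`, so
`‖c ᵥ* U‖² = c ⬝ G c ≤ σ_max(G) ‖c‖²`. Hence `‖û‖ ≤ √σ_max(G) ‖cᴸ‖`, `‖P - û‖ ≤ √σ_max(G) ε` and,
by the triangle inequality, `‖u - û‖ ≤ (1 + δ) √σ_max(G) ε`. Finally, with `e = u - û`,
`uᵀKu - ûᵀKû = eᵀKu + ûᵀKe` is at most `‖K‖ ‖e‖ (2‖û‖ + ‖e‖)` in absolute value. -/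

section

variable {ι κ : Type*} [Fintype ι]

lemma sqrt_sum_sq_eq_norm_toLp (v : ι → ℝ) : √(∑ i, v i ^ 2) = ‖WithLp.toLp 2 v‖ := by
  simp [EuclideanSpace.norm_eq]

lemma norm_toLp_sq (v : ι → ℝ) : ‖WithLp.toLp 2 v‖ ^ 2 = v ⬝ᵥ v := by
  rw [← sqrt_sum_sq_eq_norm_toLp, Real.sq_sqrt (by positivity)]
  simp only [dotProduct, sq]

lemma dotProduct_vecMul_self [Fintype κ] (U : Matrix ι κ ℝ) (c : ι → ℝ) :
    (c ᵥ* U) ⬝ᵥ (c ᵥ* U) = c ⬝ᵥ (U * Uᵀ) *ᵥ c := by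
  rw [← mulVec_mulVec, dotProduct_mulVec, mulVec_transpose]

variable [DecidableEq ι]

lemma Matrix.IsHermitian.dotProduct_mulVec_le {G : Matrix ι ι ℝ} (hG : G.IsHermitian)
    {σ : ℝ} (hσ : ∀ i, hG.eigenvalues i ≤ σ) (x : ι → ℝ) : x ⬝ᵥ G *ᵥ x ≤ σ * (x ⬝ᵥ x) := by
  have hle : G ≤ algebraMap ℝ _ σ := by
    refine le_algebraMap_of_spectrum_le (ha := hG) ?_
    rw [hG.spectrum_real_eq_range_eigenvalues]
    rintro _ ⟨i, rfl⟩
    exact hσ i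
  simpa [sub_mulVec, Algebra.algebraMap_eq_smul_one, smul_mulVec] using
    (le_iff.mp hle).dotProduct_mulVec_nonneg x

lemma norm_toLp_vecMul_le [Fintype κ] {G : Matrix ι ι ℝ} (hG : G.IsHermitian) {σ : ℝ}
    (hσ : ∀ i, hG.eigenvalues i ≤ σ) {U : Matrix ι κ ℝ} (hGU : G = U * Uᵀ) (c : ι → ℝ) :
    ‖WithLp.toLp 2 (c ᵥ* U)‖ ≤ √σ * ‖WithLp.toLp 2 c‖ := by
  have hsq : ‖WithLp.toLp 2 (c ᵥ* U)‖ ^ 2 ≤ σ * ‖WithLp.toLp 2 c‖ ^ 2 := by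
    rw [norm_toLp_sq, norm_toLp_sq, dotProduct_vecMul_self, ← hGU]
    exact hG.dotProduct_mulVec_le hσ c
  calc ‖WithLp.toLp 2 (c ᵥ* U)‖ ≤ √(σ * ‖WithLp.toLp 2 c‖ ^ 2) := Real.le_sqrt_of_sq_le hsq
    _ = √σ * ‖WithLp.toLp 2 c‖ := by
      rw [Real.sqrt_mul' _ (sq_nonneg _), Real.sqrt_sq (norm_nonneg _)]

lemma abs_dotProduct_mulVec_le [Fintype κ] [DecidableEq κ] (A : Matrix κ ι ℝ) (x : κ → ℝ)
    (y : ι → ℝ) :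
    |x ⬝ᵥ A *ᵥ y| ≤ ‖A‖ * ‖WithLp.toLp 2 x‖ * ‖WithLp.toLp 2 y‖ := by
  have hxAy : |x ⬝ᵥ A *ᵥ y| ≤ ‖WithLp.toLp 2 x‖ * ‖WithLp.toLp 2 (A *ᵥ y)‖ := by
    simpa [EuclideanSpace.inner_eq_star_dotProduct, dotProduct_comm] using
      abs_real_inner_le_norm (WithLp.toLp 2 x) (WithLp.toLp 2 (A *ᵥ y))
  calc |x ⬝ᵥ A *ᵥ y| ≤ ‖WithLp.toLp 2 x‖ * (‖A‖ * ‖WithLp.toLp 2 y‖) :=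
        hxAy.trans (by gcongr; exact A.l2_opNorm_mulVec (WithLp.toLp 2 y))
    _ = ‖A‖ * ‖WithLp.toLp 2 x‖ * ‖WithLp.toLp 2 y‖ := by ring

lemma abs_dotProduct_mulVec_sub_le (A : Matrix ι ι ℝ) (x y : ι → ℝ) :
    |x ⬝ᵥ A *ᵥ x - y ⬝ᵥ A *ᵥ y| ≤
      ‖A‖ * ‖WithLp.toLp 2 (x - y)‖ * (2 * ‖WithLp.toLp 2 y‖ + ‖WithLp.toLp 2 (x - y)‖) := by
  set e := x - y
  have hsplit : x ⬝ᵥ A *ᵥ x - y ⬝ᵥ A *ᵥ y = e ⬝ᵥ A *ᵥ x + y ⬝ᵥ A *ᵥ e := by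
    simp only [e, sub_dotProduct, mulVec_sub, dotProduct_sub]; ring
  have hx : ‖WithLp.toLp 2 x‖ ≤ ‖WithLp.toLp 2 y‖ + ‖WithLp.toLp 2 e‖ := by
    simpa [e] using norm_add_le (WithLp.toLp 2 y) (WithLp.toLp 2 e)
  have hAe : 0 ≤ ‖A‖ * ‖WithLp.toLp 2 e‖ := by positivity
  calc |x ⬝ᵥ A *ᵥ x - y ⬝ᵥ A *ᵥ y| ≤ |e ⬝ᵥ A *ᵥ x| + |y ⬝ᵥ A *ᵥ e| := hsplit ▸ abs_add_le _ _
    _ ≤ ‖A‖ * ‖WithLp.toLp 2 e‖ * ‖WithLp.toLp 2 x‖ +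
          ‖A‖ * ‖WithLp.toLp 2 y‖ * ‖WithLp.toLp 2 e‖ :=
        add_le_add (abs_dotProduct_mulVec_le A e x) (abs_dotProduct_mulVec_le A y e)
    _ ≤ _ := by nlinarith [mul_le_mul_of_nonneg_left hx hAe]

end

theorem stmt_8_general {m n : ℕ} (K : Matrix (Fin m) (Fin m) ℝ)
    (u : Fin n → Fin m → ℝ)
    (G : Matrix (Fin n) (Fin n) ℝ) (hG : ∀ i j, G i j = u i ⬝ᵥ u j)
    (hGsym : G.IsHermitian)
    (σmaxG : ℝ) (hσ : IsGreatest (Set.range hGsym.eigenvalues) σmaxG)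
    (cL cH : Fin n → ℝ) (ε δ : ℝ) (hε : 0 ≤ ε) (hδ : 0 ≤ δ)
    (hc : Real.sqrt (∑ i, (cH i - cL i) ^ 2) ≤ ε)
    (uH : Fin m → ℝ)
    (uhat P : Fin m → ℝ) (huhat : uhat = ∑ j, cL j • u j)
    (hP : P = ∑ j, cH j • u j)
    (hd : Real.sqrt (∑ i, (uH i - P i) ^ 2) ≤
      δ * Real.sqrt (∑ i, (P i - uhat i) ^ 2)) :
    |uH ⬝ᵥ K.mulVec uH - uhat ⬝ᵥ K.mulVec uhat| ≤
      (ε * (1 + δ) * σmaxG * (2 * Real.sqrt (∑ j, cL j ^ 2) + ε * (1 + δ))) *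
        ‖K‖ := by
  set U : Matrix (Fin n) (Fin m) ℝ := Matrix.of u
  have hGU : G = U * Uᵀ := by ext i j; simp [U, hG, mul_apply, dotProduct]
  have hσG : ∀ i, hGsym.eigenvalues i ≤ σmaxG := fun i => hσ.2 ⟨i, rfl⟩
  have hσ0 : 0 ≤ σmaxG := by
    obtain ⟨i, rfl⟩ := hσ.1
    exact (hGU ▸ posSemidef_self_mul_conjTranspose U).eigenvalues_nonneg i
  simp only [← Pi.sub_apply, sqrt_sum_sq_eq_norm_toLp] at hc hd ⊢
  have hcomb : ∀ c, ∑ j, c j • u j = c ᵥ* U := fun c => (vecMul_eq_sum c U).symm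
  have hPuhat : P - uhat = (cH - cL) ᵥ* U := by rw [hP, huhat, hcomb, hcomb, sub_vecMul]
  have huhat' : ‖WithLp.toLp 2 uhat‖ ≤ √σmaxG * ‖WithLp.toLp 2 cL‖ :=
    huhat ▸ hcomb cL ▸ norm_toLp_vecMul_le hGsym hσG hGU cL
  have hPuhat' : ‖WithLp.toLp 2 (P - uhat)‖ ≤ √σmaxG * ε := by
    rw [hPuhat]
    exact (norm_toLp_vecMul_le hGsym hσG hGU _).trans (by gcongr)
  have herr : ‖WithLp.toLp 2 (uH - uhat)‖ ≤ (1 + δ) * (√σmaxG * ε) := by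
    calc ‖WithLp.toLp 2 (uH - uhat)‖
        ≤ ‖WithLp.toLp 2 (uH - P)‖ + ‖WithLp.toLp 2 (P - uhat)‖ := by
          simpa using norm_add_le (WithLp.toLp 2 (uH - P)) (WithLp.toLp 2 (P - uhat))
      _ ≤ (1 + δ) * ‖WithLp.toLp 2 (P - uhat)‖ := by linarith
      _ ≤ (1 + δ) * (√σmaxG * ε) := by gcongr
  have hsqrt : √σmaxG * √σmaxG = σmaxG := Real.mul_self_sqrt hσ0
  calc |uH ⬝ᵥ K *ᵥ uH - uhat ⬝ᵥ K *ᵥ uhat|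
      ≤ ‖K‖ * ‖WithLp.toLp 2 (uH - uhat)‖ *
          (2 * ‖WithLp.toLp 2 uhat‖ + ‖WithLp.toLp 2 (uH - uhat)‖) :=
        abs_dotProduct_mulVec_sub_le K uH uhat
    _ ≤ ‖K‖ * ((1 + δ) * (√σmaxG * ε)) *
          (2 * (√σmaxG * ‖WithLp.toLp 2 cL‖) + (1 + δ) * (√σmaxG * ε)) := by gcongr
    _ = _ := by
      linear_combination (ε * (1 + δ) * (2 * ‖WithLp.toLp 2 cL‖ + ε * (1 + δ)) * ‖K‖) * hsqrt

/-- Proposition 1 (compliance part): with `A = ε(1+δ)σ_max(G)[2‖cᴸ‖ + ε(1+δ)]`,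
`|C - Ĉ| ≤ A σ_max(K)`. -/
theorem stmt_8 {m n : ℕ} (K : Matrix (Fin m) (Fin m) ℝ) (hK : K.IsHermitian)
    (u : Fin n → Fin m → ℝ)
    (G : Matrix (Fin n) (Fin n) ℝ) (hG : ∀ i j, G i j = u i ⬝ᵥ u j)
    (hGsym : G.IsHermitian)
    (σmaxG : ℝ) (hσ : IsGreatest (Set.range hGsym.eigenvalues) σmaxG)
    (cL cH : Fin n → ℝ) (ε δ : ℝ) (hε : 0 ≤ ε) (hδ : 0 ≤ δ)
    (hc : Real.sqrt (∑ i, (cH i - cL i) ^ 2) ≤ ε)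
    (uH : Fin m → ℝ)
    (uhat P : Fin m → ℝ) (huhat : uhat = ∑ j, cL j • u j)
    (hP : P = ∑ j, cH j • u j)
    (hd : Real.sqrt (∑ i, (uH i - P i) ^ 2) ≤
      δ * Real.sqrt (∑ i, (P i - uhat i) ^ 2)) :
    |uH ⬝ᵥ K.mulVec uH - uhat ⬝ᵥ K.mulVec uhat| ≤
      (ε * (1 + δ) * σmaxG * (2 * Real.sqrt (∑ j, cL j ^ 2) + ε * (1 + δ))) *
        ‖K‖ :=
  stmt_8_general K u G hG hGsym σmaxG hσ cL cH ε δ hε hδ hc uH uhat P huhat hP hd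
end
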